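/- arXiv:1710.10927 — 2 statements merged into one kernel-verified Lean document; each statement's English description precedes it below -/
import Mathlib

section
/- For every total computable predicate S : ℕ → ℕ → ℕ → ℕ → ℕ → Bool there is a uniformly computable family of equivalence relations (R_e)_{e∈ℕ} on ℕ such that every R_e has unbounded character (finite classes of arbitrarily large size), and for every e: R_e has only finitely many infinite equivalence classes if and only if there exists x such that for all y there exists u such that for all v, S x y u v e = true. -/
/-- The equivalence class of `a` under the relation `E`. -/
def classOf (E : ℕ → ℕ → Prop) (a : ℕ) : Set ℕ := {x | E x a}

/-- `f` is an embedding of the equivalence structure `(ℕ, E)` into `(ℕ, E')`. -/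
def IsEmb (E E' : ℕ → ℕ → Prop) (f : ℕ → ℕ) : Prop :=
  Function.Injective f ∧ ∀ x y, E x y ↔ E' (f x) (f y)

/-- Bi-embeddability of equivalence structures on ℕ. -/
def BiEmb (E E' : ℕ → ℕ → Prop) : Prop :=
  (∃ f, IsEmb E E' f) ∧ (∃ g, IsEmb E' E g)

/-- `E` is a computable (decidable by a total computable function) binary relation. -/
def CompRelNat (E : ℕ → ℕ → Prop) : Prop :=
  ∃ f : ℕ → ℕ → Bool, Computable₂ f ∧ ∀ x y, E x y ↔ f x y = true

/-- The collection of infinite equivalence classes of `E`. -/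
def InfClasses (E : ℕ → ℕ → Prop) : Set (Set ℕ) :=
  {C | (∃ a, C = classOf E a) ∧ C.Infinite}

/-- The collection of equivalence classes of `E` of size exactly `m`. -/
def sizeClasses (E : ℕ → ℕ → Prop) (m : ℕ) : Set (Set ℕ) :=
  {C | (∃ a, C = classOf E a) ∧ C.Finite ∧ C.ncard = m}

/-- `E` has bounded character: some `k` bounds the size of every finite class. -/
def BoundedCharacter (E : ℕ → ℕ → Prop) : Prop :=
  ∃ k, ∀ a, (classOf E a).Finite → (classOf E a).ncard ≤ k

/-- `E` has unbounded character: finite classes of arbitrarily large size. -/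
def UnboundedCharacter (E : ℕ → ℕ → Prop) : Prop :=
  ∀ k, ∃ a, (classOf E a).Finite ∧ k < (classOf E a).ncard

/-- `E` is computably bi-embeddably categorical. -/
def CompBiembCat (E : ℕ → ℕ → Prop) : Prop :=
  ∀ E' : ℕ → ℕ → Prop, Equivalence E' → CompRelNat E' → BiEmb E E' →
    (∃ f, Computable f ∧ IsEmb E E' f) ∧ (∃ g, Computable g ∧ IsEmb E' E g)

/-- `f` is an isomorphism of `(ℕ, E)` onto `(ℕ, E')`. -/
def IsIso (E E' : ℕ → ℕ → Prop) (f : ℕ → ℕ) : Prop :=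
  Function.Bijective f ∧ ∀ x y, E x y ↔ E' (f x) (f y)

/-- `E` is computably categorical. -/
def CompCat (E : ℕ → ℕ → Prop) : Prop :=
  ∀ E' : ℕ → ℕ → Prop, Equivalence E' → CompRelNat E' → (∃ f, IsIso E' E f) →
    ∃ f, Computable f ∧ IsIso E' E f

/-- `W e` is the domain of the `e`-th partial computable function. -/
def W (e : ℕ) : Set ℕ :=
  {x | ((Denumerable.ofNat Nat.Partrec.Code e).eval x).Dom}
namespace S16

/-- decode a number as a list -/
def LL (w : ℕ) : List ℕ := Denumerable.ofNat (List ℕ) w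

def item (w x : ℕ) : ℕ := (LL w).getD x 0
def Y (w x : ℕ) : ℕ := (item w x).unpair.1
def inner (w x : ℕ) : List ℕ := LL (item w x).unpair.2
def UU (w x y : ℕ) : ℕ := (inner w x).getD y 0

def canon (n w : ℕ) : Bool :=
  ((LL w).length == n+1) &&
    (List.range (n+1)).all fun x => (inner w x).length == Y w x

def aX (a : ℕ) : ℕ := a.unpair.1
def aU (a : ℕ) : ℕ := a.unpair.2.unpair.1
def aY (a : ℕ) : ℕ := a.unpair.2.unpair.2.unpair.1
def aU' (a : ℕ) : ℕ := a.unpair.2.unpair.2.unpair.2.unpair.1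
def aV (a : ℕ) : ℕ := a.unpair.2.unpair.2.unpair.2.unpair.2

def theta (F : ℕ → ℕ → ℕ → ℕ → ℕ → Bool) (e n w a b : ℕ) : Bool :=
  canon n w &&
  (!(decide (aX a ≤ n)) || !(F (aX a) (Y w (aX a)) (aU a) b.unpair.1 e)) &&
  (!(decide (aX a ≤ n) && decide (aY a < Y w (aX a))) ||
      F (aX a) (aY a) (UU w (aX a) (aY a)) (aV a) e) &&
  (!(decide (aX a ≤ n) && decide (aY a < Y w (aX a)) &&
        decide (aU' a < UU w (aX a) (aY a))) ||
      !(F (aX a) (aY a) (aU' a) b.unpair.2 e))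

def Phi (F : ℕ → ℕ → ℕ → ℕ → ℕ → Bool) (e n w a s : ℕ) : Bool :=
  (List.range (a+1)).all fun a' => (List.range (s+1)).any fun b => theta F e n w a' b

def Dmem (F : ℕ → ℕ → ℕ → ℕ → ℕ → Bool) (e n w t : ℕ) : Bool :=
  Phi F e n w t.unpair.1 t.unpair.2 &&
    (List.range t.unpair.2).all fun s' => !(Phi F e n w t.unpair.1 s')

def labelF (F : ℕ → ℕ → ℕ → ℕ → ℕ → Bool) (e x : ℕ) : ℕ :=
  if x.unpair.1.unpair.1 = 0 ∧ x.unpair.2 ≤ x.unpair.1.unpair.2 then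
    Nat.pair 0 (Nat.pair 0 x.unpair.1.unpair.2)
  else if x.unpair.1.unpair.1 = 1 ∧
      Dmem F e x.unpair.1.unpair.2.unpair.1 x.unpair.1.unpair.2.unpair.2 x.unpair.2 = true then
    Nat.pair 0 (Nat.pair 1 x.unpair.1.unpair.2)
  else Nat.pair 1 x

def quint (x y u v e : ℕ) : ℕ := Nat.pair x (Nat.pair y (Nat.pair u (Nat.pair v e)))

def Stab (S : ℕ → ℕ → ℕ → ℕ → ℕ → Bool) (N : ℕ) : List Bool :=
  (List.range (N+1)).map fun q =>
    S q.unpair.1 q.unpair.2.unpair.1 q.unpair.2.unpair.2.unpair.1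
      q.unpair.2.unpair.2.unpair.2.unpair.1 q.unpair.2.unpair.2.unpair.2.unpair.2

def Sget (L : List Bool) (x y u v e : ℕ) : Bool := L.getD (quint x y u v e) true

def label (S : ℕ → ℕ → ℕ → ℕ → ℕ → Bool) (e x : ℕ) : ℕ :=
  labelF (Sget (Stab S (quint x x x x e))) e x

def Rfun (S : ℕ → ℕ → ℕ → ℕ → ℕ → Bool) (e x y : ℕ) : Bool :=
  label S e x == label S e y

-- basic sanity lemmas
theorem Sget_Stab (S : ℕ → ℕ → ℕ → ℕ → ℕ → Bool) {x y u v e N : ℕ}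
    (h : quint x y u v e ≤ N) : Sget (Stab S N) x y u v e = S x y u v e := by
  unfold Sget Stab
  rw [List.getD_eq_getElem?_getD, List.getElem?_map, List.getElem?_range
    (by omega : quint x y u v e < N+1)]
  simp [quint, Nat.unpair_pair]

theorem pair_mono {a b c d : ℕ} (h1 : a ≤ c) (h2 : b ≤ d) :
    Nat.pair a b ≤ Nat.pair c d := by
  unfold Nat.pair
  split <;> split <;> nlinarith

theorem mem_LL_le {z w : ℕ} (h : z ∈ LL w) : z ≤ w := by
  induction w using Nat.strong_induction_on with
  | _ w ih =>
    match w with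
    | 0 => simp [LL] at h
    | v+1 =>
      rw [LL, Denumerable.list_ofNat_succ] at h
      rcases List.mem_cons.1 h with h | h
      · exact h ▸ (Nat.unpair_left_le v).trans (Nat.le_succ v)
      · exact (ih v.unpair.2 (Nat.lt_succ_of_le (Nat.unpair_right_le v)) h).trans
          ((Nat.unpair_right_le v).trans (Nat.le_succ v))

theorem item_le (w x : ℕ) : item w x ≤ w := by
  unfold item
  rcases Nat.lt_or_ge x (LL w).length with h | h
  · exact mem_LL_le (by rw [List.getD_eq_getElem _ _ h]; exact List.getElem_mem _)
  · simp [List.getElem?_eq_none h]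

theorem Y_le (w x : ℕ) : Y w x ≤ w := (Nat.unpair_left_le _).trans (item_le w x)

theorem UU_le (w x y : ℕ) : UU w x y ≤ w := by
  unfold UU
  rcases Nat.lt_or_ge y (inner w x).length with h | h
  · exact (mem_LL_le (by rw [List.getD_eq_getElem _ _ h]; exact List.getElem_mem _)).trans
      ((Nat.unpair_right_le _).trans (item_le w x))
  · simp [List.getElem?_eq_none h]


theorem unpair1_le (a : ℕ) : a.unpair.1 ≤ a := Nat.unpair_left_le a
theorem unpair2_le (a : ℕ) : a.unpair.2 ≤ a := Nat.unpair_right_le a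

section sem
variable {F F' : ℕ → ℕ → ℕ → ℕ → ℕ → Bool} {e B : ℕ}

theorem Phi_iff {n w a s : ℕ} : Phi F e n w a s = true ↔
    ∀ a' ≤ a, ∃ b ≤ s, theta F e n w a' b = true := by
  simp [Phi, List.all_eq_true, List.any_eq_true, List.mem_range, Nat.lt_succ_iff]

theorem Dmem_iff {n w t : ℕ} : Dmem F e n w t = true ↔
    (Phi F e n w t.unpair.1 t.unpair.2 = true ∧
      ∀ s' < t.unpair.2, ¬ Phi F e n w t.unpair.1 s' = true) := by
  simp [Dmem, List.all_eq_true, List.mem_range]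

theorem theta_congr (H : ∀ p q r s, p ≤ B → q ≤ B → r ≤ B → s ≤ B → F p q r s e = F' p q r s e)
    {n w a b : ℕ} (hw : w ≤ B) (ha : a ≤ B) (hb : b ≤ B) :
    theta F e n w a b = theta F' e n w a b := by
  have h1 : aX a ≤ B := (unpair1_le a).trans ha
  have h2 : aU a ≤ B := ((unpair1_le _).trans (unpair2_le a)).trans ha
  have h3 : aY a ≤ B := ((unpair1_le _).trans ((unpair2_le _).trans (unpair2_le a))).trans ha
  have h4 : aU' a ≤ B :=
    ((unpair1_le _).trans ((unpair2_le _).trans ((unpair2_le _).trans (unpair2_le a)))).trans ha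
  have h5 : aV a ≤ B :=
    ((unpair2_le _).trans ((unpair2_le _).trans ((unpair2_le _).trans (unpair2_le a)))).trans ha
  unfold theta
  rw [H _ _ _ _ h1 ((Y_le w _).trans hw) h2 ((unpair1_le b).trans hb),
    H _ _ _ _ h1 h3 ((UU_le w _ _).trans hw) h5,
    H _ _ _ _ h1 h3 h4 ((unpair2_le b).trans hb)]

theorem Phi_congr (H : ∀ p q r s, p ≤ B → q ≤ B → r ≤ B → s ≤ B → F p q r s e = F' p q r s e)
    {n w a s : ℕ} (hw : w ≤ B) (ha : a ≤ B) (hs : s ≤ B) :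
    Phi F e n w a s = Phi F' e n w a s := by
  rw [Bool.eq_iff_iff, Phi_iff, Phi_iff]
  constructor <;> intro h a' ha' <;> rcases h a' ha' with ⟨b, hb, hth⟩ <;> refine ⟨b, hb, ?_⟩
  · rw [← theta_congr H hw (ha'.trans ha) (hb.trans hs)]; exact hth
  · rw [theta_congr H hw (ha'.trans ha) (hb.trans hs)]; exact hth

theorem Dmem_congr (H : ∀ p q r s, p ≤ B → q ≤ B → r ≤ B → s ≤ B → F p q r s e = F' p q r s e)
    {n w t : ℕ} (hw : w ≤ B) (ht : t ≤ B) :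
    Dmem F e n w t = Dmem F' e n w t := by
  rw [Bool.eq_iff_iff, Dmem_iff, Dmem_iff]
  rw [Phi_congr H hw ((unpair1_le t).trans ht) ((unpair2_le t).trans ht)]
  constructor <;> rintro ⟨h1, h2⟩ <;> refine ⟨h1, fun s' hs' => ?_⟩
  · rw [← Phi_congr H hw ((unpair1_le t).trans ht) ((le_of_lt hs').trans ((unpair2_le t).trans ht))]
    exact h2 s' hs'
  · rw [Phi_congr H hw ((unpair1_le t).trans ht) ((le_of_lt hs').trans ((unpair2_le t).trans ht))]
    exact h2 s' hs'

theorem labelF_congr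
    (H : ∀ p q r s, p ≤ B → q ≤ B → r ≤ B → s ≤ B → F p q r s e = F' p q r s e)
    {x : ℕ} (hx : x ≤ B) : labelF F e x = labelF F' e x := by
  have hD : Dmem F e x.unpair.1.unpair.2.unpair.1 x.unpair.1.unpair.2.unpair.2 x.unpair.2 =
      Dmem F' e x.unpair.1.unpair.2.unpair.1 x.unpair.1.unpair.2.unpair.2 x.unpair.2 :=
    Dmem_congr H (((unpair2_le _).trans (unpair2_le _)).trans ((unpair1_le x).trans hx))
      ((unpair2_le x).trans hx)
  unfold labelF
  rw [hD]

end sem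

theorem label_eq (S : ℕ → ℕ → ℕ → ℕ → ℕ → Bool) (e x : ℕ) :
    label S e x = labelF S e x := by
  refine labelF_congr (B := x) (fun p q r s hp hq hr hs => ?_) (le_refl x)
  exact Sget_Stab S (pair_mono hp (pair_mono hq (pair_mono hr (pair_mono hs (le_refl e)))))

theorem Rfun_iff (S : ℕ → ℕ → ℕ → ℕ → ℕ → Bool) (e x y : ℕ) :
    Rfun S e x y = true ↔ labelF S e x = labelF S e y := by
  rw [Rfun, beq_iff_eq, label_eq, label_eq]


open scoped Classical

variable (S : ℕ → ℕ → ℕ → ℕ → ℕ → Bool) (e : ℕ)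

/-- `y` is a "bad" column for `x`: `∀ u ∃ v, ¬S x y u v e`. -/
def bad (x y : ℕ) : Prop := ∀ u, ∃ v, S x y u v e = false

/-- `w` correctly codes, for each `x ≤ n`, the least bad `y` and the least Π₁-witnesses below. -/
def okw (n w : ℕ) : Prop :=
  canon n w = true ∧ ∀ x ≤ n,
    (∀ u, ∃ v, S x (Y w x) u v e = false) ∧
    ∀ y < Y w x, (∀ v, S x y (UU w x y) v e = true) ∧
      (∀ u' < UU w x y, ∃ v, S x y u' v e = false)

theorem canon_iff {n w : ℕ} : canon n w = true ↔
    ((LL w).length = n+1 ∧ ∀ x < n+1, (inner w x).length = Y w x) := by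
  simp [canon, List.all_eq_true, List.mem_range]

theorem theta_iff {n w a b : ℕ} : theta S e n w a b = true ↔
    canon n w = true ∧
    (aX a ≤ n → S (aX a) (Y w (aX a)) (aU a) b.unpair.1 e = false) ∧
    (aX a ≤ n → aY a < Y w (aX a) →
      S (aX a) (aY a) (UU w (aX a) (aY a)) (aV a) e = true) ∧
    (aX a ≤ n → aY a < Y w (aX a) → aU' a < UU w (aX a) (aY a) →
      S (aX a) (aY a) (aU' a) b.unpair.2 e = false) := by
  unfold theta
  by_cases hx : aX a ≤ n <;> by_cases hy : aY a < Y w (aX a) <;>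
    by_cases hu : aU' a < UU w (aX a) (aY a) <;>
    simp [hx, hy, hu, and_assoc]

theorem theta_forall_iff {n w : ℕ} :
    (∀ a, ∃ b, theta S e n w a b = true) ↔ okw S e n w := by
  constructor
  · intro h
    obtain ⟨b0, hb0⟩ := h 0
    have hcan : canon n w = true := ((theta_iff S e).1 hb0).1
    refine ⟨hcan, fun x hx => ?_⟩
    refine ⟨fun u => ?_, fun y hy => ⟨fun v => ?_, fun u' hu' => ?_⟩⟩
    · obtain ⟨b, hb⟩ := h (Nat.pair x (Nat.pair u 0))
      have := ((theta_iff S e).1 hb).2.1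
      simp only [aX, aU, Nat.unpair_pair] at this
      exact ⟨b.unpair.1, this hx⟩
    · obtain ⟨b, hb⟩ := h (Nat.pair x (Nat.pair 0 (Nat.pair y (Nat.pair 0 v))))
      have := ((theta_iff S e).1 hb).2.2.1
      simp only [aX, aY, aV, Nat.unpair_pair] at this
      exact this hx hy
    · obtain ⟨b, hb⟩ := h (Nat.pair x (Nat.pair 0 (Nat.pair y (Nat.pair u' 0))))
      have := ((theta_iff S e).1 hb).2.2.2
      simp only [aX, aY, aU', Nat.unpair_pair] at this
      exact ⟨b.unpair.2, this hx hy hu'⟩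
  · rintro ⟨hcan, hok⟩ a
    by_cases hx : aX a ≤ n
    · obtain ⟨v1, hv1⟩ := (hok (aX a) hx).1 (aU a)
      have hv2 : ∃ v2, (aY a < Y w (aX a) → aU' a < UU w (aX a) (aY a) →
          S (aX a) (aY a) (aU' a) v2 e = false) := by
        by_cases hy : aY a < Y w (aX a)
        · by_cases hu : aU' a < UU w (aX a) (aY a)
          · obtain ⟨v2, hv2⟩ := ((hok (aX a) hx).2 (aY a) hy).2 (aU' a) hu
            exact ⟨v2, fun _ _ => hv2⟩
          · exact ⟨0, fun _ h => absurd h hu⟩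
        · exact ⟨0, fun h => absurd h hy⟩
      obtain ⟨v2, hv2⟩ := hv2
      refine ⟨Nat.pair v1 v2, (theta_iff S e).2 ⟨hcan, ?_, ?_, ?_⟩⟩
      · intro _; rw [Nat.unpair_pair]; exact hv1
      · intro _ hy; exact ((hok (aX a) hx).2 (aY a) hy).1 (aV a)
      · intro _ hy hu; rw [Nat.unpair_pair]; exact hv2 hy hu
    · exact ⟨0, (theta_iff S e).2 ⟨hcan, fun h => absurd h hx, fun h => absurd h hx,
        fun h => absurd h hx⟩⟩

/-- the index set of the potential infinite class attached to `(n,w)` -/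
def Dset (n w : ℕ) : Set ℕ := {t | Dmem S e n w t = true}

theorem Phi_mono {n w a s s' : ℕ} (h : s ≤ s') (hp : Phi S e n w a s = true) :
    Phi S e n w a s' = true := by
  rw [Phi_iff] at hp ⊢
  intro a' ha'
  obtain ⟨b, hb, ht⟩ := hp a' ha'
  exact ⟨b, hb.trans h, ht⟩

theorem Dset_infinite_iff {n w : ℕ} :
    (Dset S e n w).Infinite ↔ ∀ a, ∃ b, theta S e n w a b = true := by
  constructor
  · intro hinf
    by_contra hc
    push_neg at hc
    obtain ⟨a0, ha0⟩ := hc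
    have hsub : ∀ t ∈ Dset S e n w, t.unpair.1 < a0 := by
      intro t ht
      by_contra hge
      push_neg at hge
      have hPhi := (Dmem_iff.1 ht).1
      rw [Phi_iff] at hPhi
      obtain ⟨b, _, htb⟩ := hPhi a0 hge
      exact absurd htb (by simpa using ha0 b)
    have hinj : Set.InjOn (fun t => t.unpair.1) (Dset S e n w) := by
      intro t ht t' ht' hEq
      simp only at hEq
      have h1 := Dmem_iff.1 ht
      have h2 := Dmem_iff.1 ht'
      rw [hEq] at h1
      have hs : t.unpair.2 = t'.unpair.2 := by
        by_contra hne
        rcases Nat.lt_or_ge t.unpair.2 t'.unpair.2 with hlt | hge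
        · exact h2.2 _ hlt h1.1
        · exact h1.2 _ (lt_of_le_of_ne hge (fun h => hne h.symm)) h2.1
      rw [← Nat.pair_unpair t, ← Nat.pair_unpair t', hEq, hs]
    exact hinf (Set.Finite.of_finite_image
      ((Set.finite_Iio a0).subset (by rintro _ ⟨t, ht, rfl⟩; exact hsub t ht)) hinj)
  · intro h
    have hPhiEx : ∀ a, ∃ s, Phi S e n w a s = true := by
      intro a
      induction a with
      | zero =>
        obtain ⟨b, hb⟩ := h 0
        refine ⟨b, Phi_iff.2 fun a' ha' => ?_⟩
        interval_cases a'
        exact ⟨b, le_refl b, hb⟩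
      | succ a ih =>
        obtain ⟨s, hs⟩ := ih
        obtain ⟨b, hb⟩ := h (a+1)
        refine ⟨max s b, Phi_iff.2 fun a' ha' => ?_⟩
        rcases Nat.lt_or_ge a' (a+1) with hlt | hge
        · obtain ⟨b', hb', ht⟩ := Phi_iff.1 hs a' (Nat.lt_succ_iff.1 hlt)
          exact ⟨b', hb'.trans (le_max_left s b), ht⟩
        · have : a' = a + 1 := le_antisymm ha' hge
          exact ⟨b, (le_max_right s b), this ▸ hb⟩
    have hmem : ∀ a, Nat.pair a (Nat.find (hPhiEx a)) ∈ Dset S e n w := by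
      intro a
      refine Dmem_iff.2 ⟨?_, ?_⟩
      · simp only [Nat.unpair_pair]
        exact Nat.find_spec (hPhiEx a)
      · simp only [Nat.unpair_pair]
        intro s' hs'
        exact Nat.find_min (hPhiEx a) hs'
    refine Set.infinite_of_injective_forall_mem (f := fun a => Nat.pair a (Nat.find (hPhiEx a)))
      ?_ hmem
    intro a a' hEq
    have := congrArg (fun t => t.unpair.1) hEq
    simpa using this

theorem LL_encode (L : List ℕ) : LL (Encodable.encode L) = L := Denumerable.ofNat_encode L

theorem LL_inj {w w' : ℕ} (h : LL w = LL w') : w = w' := by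
  simpa [LL, Denumerable.encode_ofNat] using congrArg Encodable.encode h

theorem getD_range_map {f : ℕ → ℕ} {k i : ℕ} (h : i < k) :
    ((List.range k).map f).getD i 0 = f i := by
  rw [List.getD_eq_getElem _ _ (by simpa using h)]
  simp

theorem okw_unique {n w w' : ℕ} (hw : okw S e n w) (hw' : okw S e n w') : w = w' := by
  have key : ∀ w1 w2, okw S e n w1 → okw S e n w2 → ∀ x ≤ n, ¬ (Y w1 x < Y w2 x) := by
    rintro w1 w2 ⟨_, hok1⟩ ⟨_, hok2⟩ x hx hlt
    obtain ⟨v, hv⟩ := (hok1 x hx).1 (UU w2 x (Y w1 x))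
    have h2 := ((hok2 x hx).2 (Y w1 x) hlt).1 v
    rw [h2] at hv
    cases hv
  have hY : ∀ x ≤ n, Y w x = Y w' x := fun x hx =>
    le_antisymm (not_lt.1 (key w' w hw' hw x hx)) (not_lt.1 (key w w' hw hw' x hx))
  have keyU : ∀ w1 w2, okw S e n w1 → okw S e n w2 → ∀ x ≤ n, ∀ y, y < Y w1 x → y < Y w2 x →
      ¬ (UU w1 x y < UU w2 x y) := by
    rintro w1 w2 ⟨_, hok1⟩ ⟨_, hok2⟩ x hx y hy1 hy2 hlt
    obtain ⟨v, hv⟩ := ((hok2 x hx).2 y hy2).2 (UU w1 x y) hlt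
    have h1 := ((hok1 x hx).2 y hy1).1 v
    rw [h1] at hv
    cases hv
  have hU : ∀ x ≤ n, ∀ y < Y w x, UU w x y = UU w' x y := by
    intro x hx y hy
    exact le_antisymm (not_lt.1 (keyU w' w hw' hw x hx y (hY x hx ▸ hy) hy))
      (not_lt.1 (keyU w w' hw hw' x hx y hy (hY x hx ▸ hy)))
  have hcan := canon_iff.1 hw.1
  have hcan' := canon_iff.1 hw'.1
  have hinner : ∀ x ≤ n, inner w x = inner w' x := by
    intro x hx
    have hlen : (inner w x).length = (inner w' x).length := by
      rw [hcan.2 x (Nat.lt_succ_of_le hx), hcan'.2 x (Nat.lt_succ_of_le hx), hY x hx]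
    refine List.ext_getElem hlen fun i h1 h2 => ?_
    have hiY : i < Y w x := by rw [← hcan.2 x (Nat.lt_succ_of_le hx)]; exact h1
    have e1 : (inner w x)[i] = UU w x i := by rw [UU, List.getD_eq_getElem _ _ h1]
    have e2 : (inner w' x)[i] = UU w' x i := by rw [UU, List.getD_eq_getElem _ _ h2]
    rw [e1, e2, hU x hx i hiY]
  have hitem : ∀ x ≤ n, item w x = item w' x := by
    intro x hx
    have h1 : (item w x).unpair.1 = (item w' x).unpair.1 := hY x hx
    have h2 : (item w x).unpair.2 = (item w' x).unpair.2 := LL_inj (hinner x hx)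
    rw [← Nat.pair_unpair (item w x), ← Nat.pair_unpair (item w' x), h1, h2]
  apply LL_inj
  refine List.ext_getElem (by rw [hcan.1, hcan'.1]) fun i h1 h2 => ?_
  have hin : i ≤ n := by
    have := h1
    rw [hcan.1] at this
    omega
  have e1 : (LL w)[i] = item w i := by rw [item, List.getD_eq_getElem _ _ h1]
  have e2 : (LL w')[i] = item w' i := by rw [item, List.getD_eq_getElem _ _ h2]
  rw [e1, e2, hitem i hin]

theorem okw_exists {n : ℕ} (H : ∀ x ≤ n, ∃ y, bad S e x y) : ∃ w, okw S e n w := by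
  classical
  set yx : ℕ → ℕ := fun x => if h : ∃ y, bad S e x y then Nat.find h else 0 with hyx
  set uu : ℕ → ℕ → ℕ :=
    fun x y => if h : ∃ u, ∀ v, S x y u v e = true then Nat.find h else 0 with huu
  set w : ℕ := Encodable.encode ((List.range (n+1)).map fun x =>
    Nat.pair (yx x) (Encodable.encode ((List.range (yx x)).map (uu x)))) with hw
  have hLL : LL w = (List.range (n+1)).map fun x =>
      Nat.pair (yx x) (Encodable.encode ((List.range (yx x)).map (uu x))) := LL_encode _
  have hitem : ∀ x ≤ n, item w x =
      Nat.pair (yx x) (Encodable.encode ((List.range (yx x)).map (uu x))) := by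
    intro x hx
    rw [item, hLL, getD_range_map (Nat.lt_succ_of_le hx)]
  have hYx : ∀ x ≤ n, Y w x = yx x := by
    intro x hx
    rw [Y, hitem x hx, Nat.unpair_pair]
  have hinner : ∀ x ≤ n, inner w x = (List.range (yx x)).map (uu x) := by
    intro x hx
    rw [inner, hitem x hx, Nat.unpair_pair, LL_encode]
  have hUU : ∀ x ≤ n, ∀ y < yx x, UU w x y = uu x y := by
    intro x hx y hy
    rw [UU, hinner x hx, getD_range_map hy]
  have hbadx : ∀ x ≤ n, bad S e x (yx x) := by
    intro x hx
    have h := H x hx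
    simp only [hyx, dif_pos h]
    exact Nat.find_spec h
  have hgood : ∀ x ≤ n, ∀ y < yx x, ∀ v, S x y (uu x y) v e = true := by
    intro x hx y hy v
    have h := H x hx
    simp only [hyx, dif_pos h] at hy
    have hnb : ¬ bad S e x y := Nat.find_min h hy
    have hg : ∃ u, ∀ v, S x y u v e = true := by
      unfold bad at hnb
      push_neg at hnb
      obtain ⟨u, hu⟩ := hnb
      exact ⟨u, fun v => by
        have := hu v
        revert this
        cases S x y u v e <;> simp⟩
    simp only [huu, dif_pos hg]
    exact Nat.find_spec hg v
  have hleast : ∀ x ≤ n, ∀ y < yx x, ∀ u' < uu x y, ∃ v, S x y u' v e = false := by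
    intro x hx y hy u' hu'
    by_cases hg : ∃ u, ∀ v, S x y u v e = true
    · simp only [huu, dif_pos hg] at hu'
      have := Nat.find_min hg hu'
      push_neg at this
      obtain ⟨v, hv⟩ := this
      exact ⟨v, by revert hv; cases S x y u' v e <;> simp⟩
    · simp only [huu, dif_neg hg] at hu'
      omega
  refine ⟨w, canon_iff.2 ⟨by rw [hLL]; simp, fun x hx => ?_⟩, fun x hx => ?_⟩
  · rw [hinner x (Nat.lt_succ_iff.1 hx), hYx x (Nat.lt_succ_iff.1 hx)]
    simp
  · constructor
    · intro u
      rw [hYx x hx]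
      exact hbadx x hx u
    · intro y hy
      rw [hYx x hx] at hy
      rw [hUU x hx y hy]
      exact ⟨hgood x hx y hy, hleast x hx y hy⟩

theorem label_fill_val {k t : ℕ} (ht : t ≤ k) :
    labelF S e (Nat.pair (Nat.pair 0 k) t) = Nat.pair 0 (Nat.pair 0 k) := by
  unfold labelF
  simp [Nat.unpair_pair, ht]

theorem label_D_val {n w t : ℕ} (ht : Dmem S e n w t = true) :
    labelF S e (Nat.pair (Nat.pair 1 (Nat.pair n w)) t) =
      Nat.pair 0 (Nat.pair 1 (Nat.pair n w)) := by
  unfold labelF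
  simp [Nat.unpair_pair, ht]

/-- The potential infinite class attached to `(n, w)`. -/
def Cnw (n w : ℕ) : Set ℕ := (fun t => Nat.pair (Nat.pair 1 (Nat.pair n w)) t) '' Dset S e n w

theorem fiber_fill (k : ℕ) : {x | labelF S e x = Nat.pair 0 (Nat.pair 0 k)} =
    (fun t => Nat.pair (Nat.pair 0 k) t) '' Set.Iic k := by
  ext x
  simp only [Set.mem_setOf_eq, Set.mem_image, Set.mem_Iic]
  constructor
  · intro h
    unfold labelF at h
    split_ifs at h with h1 h2
    · rw [Nat.pair_eq_pair, Nat.pair_eq_pair] at h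
      refine ⟨x.unpair.2, h.2.2 ▸ h1.2, ?_⟩
      conv_rhs => rw [← Nat.pair_unpair x]
      congr 1
      rw [← Nat.pair_unpair x.unpair.1, h1.1, h.2.2]
    · rw [Nat.pair_eq_pair, Nat.pair_eq_pair] at h
      exact absurd h.2.1 one_ne_zero
    · rw [Nat.pair_eq_pair] at h
      exact absurd h.1 one_ne_zero
  · rintro ⟨t, ht, rfl⟩
    exact label_fill_val S e ht

theorem fiber_D (n w : ℕ) : {x | labelF S e x = Nat.pair 0 (Nat.pair 1 (Nat.pair n w))} =
    Cnw S e n w := by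
  ext x
  simp only [Set.mem_setOf_eq, Cnw, Set.mem_image]
  constructor
  · intro h
    unfold labelF at h
    split_ifs at h with h1 h2
    · rw [Nat.pair_eq_pair, Nat.pair_eq_pair] at h
      exact absurd h.2.1 zero_ne_one
    · rw [Nat.pair_eq_pair, Nat.pair_eq_pair] at h
      have hk : x.unpair.1.unpair.2 = Nat.pair n w := h.2.2
      refine ⟨x.unpair.2, ?_, ?_⟩
      · have hd := h2.2
        rw [hk, Nat.unpair_pair] at hd
        exact hd
      · conv_rhs => rw [← Nat.pair_unpair x]
        congr 1
        rw [← Nat.pair_unpair x.unpair.1, h2.1, hk]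
    · rw [Nat.pair_eq_pair] at h
      exact absurd h.1 one_ne_zero
  · rintro ⟨t, ht, rfl⟩
    exact label_D_val S e ht

theorem fiber_single (z : ℕ) : {x | labelF S e x = Nat.pair 1 z} ⊆ {z} := by
  intro x h
  simp only [Set.mem_setOf_eq] at h
  unfold labelF at h
  split_ifs at h with h1 h2
  · rw [Nat.pair_eq_pair] at h
    exact absurd h.1 zero_ne_one
  · rw [Nat.pair_eq_pair] at h
    exact absurd h.1 zero_ne_one
  · rw [Nat.pair_eq_pair] at h
    exact h.2 ▸ rfl

theorem label_shape (a : ℕ) : (∃ k, labelF S e a = Nat.pair 0 (Nat.pair 0 k)) ∨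
    (∃ n w, labelF S e a = Nat.pair 0 (Nat.pair 1 (Nat.pair n w))) ∨
    labelF S e a = Nat.pair 1 a := by
  unfold labelF
  split_ifs with h1 h2
  · exact Or.inl ⟨_, rfl⟩
  · refine Or.inr (Or.inl ⟨a.unpair.1.unpair.2.unpair.1, a.unpair.1.unpair.2.unpair.2, ?_⟩)
    rw [Nat.pair_unpair]
  · exact Or.inr (Or.inr rfl)

theorem classOf_eq (a : ℕ) : classOf (fun x y => Rfun S e x y = true) a =
    {x | labelF S e x = labelF S e a} := by
  ext x
  simp only [classOf, Set.mem_setOf_eq, Rfun_iff]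

theorem equiv_Rfun : Equivalence (fun x y => Rfun S e x y = true) := by
  constructor
  · intro x
    rw [Rfun_iff]
  · intro x y h
    rw [Rfun_iff] at h ⊢
    exact h.symm
  · intro x y z h1 h2
    rw [Rfun_iff] at h1 h2 ⊢
    exact h1.trans h2

theorem pairLeft_inj (M : ℕ) : Function.Injective (fun t => Nat.pair M t) := by
  intro a b h
  simpa [Nat.pair_eq_pair] using h

theorem unbounded_Rfun : UnboundedCharacter (fun x y => Rfun S e x y = true) := by
  intro k
  refine ⟨Nat.pair (Nat.pair 0 k) 0, ?_⟩
  have hla := label_fill_val S e (Nat.zero_le k)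
  have hcl : classOf (fun x y => Rfun S e x y = true) (Nat.pair (Nat.pair 0 k) 0) =
      (fun t => Nat.pair (Nat.pair 0 k) t) '' Set.Iic k := by
    rw [classOf_eq, hla, fiber_fill]
  rw [hcl]
  constructor
  · exact (Set.finite_Iic k).image _
  · rw [Set.ncard_image_of_injective _ (pairLeft_inj _), ← Finset.coe_Iic,
      Set.ncard_coe_finset, Nat.card_Iic]
    omega

theorem bad_vs_good {x y : ℕ} (hb : bad S e x y) (hg : ∃ u, ∀ v, S x y u v e = true) :
    False := by
  obtain ⟨u, hu⟩ := hg
  obtain ⟨v, hv⟩ := hb u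
  rw [hu v] at hv
  cases hv

theorem mem_InfClasses_iff {C : Set ℕ} :
    C ∈ InfClasses (fun x y => Rfun S e x y = true) ↔
      ∃ n w, okw S e n w ∧ C = Cnw S e n w := by
  constructor
  · rintro ⟨⟨a, rfl⟩, hinf⟩
    rw [classOf_eq] at hinf ⊢
    rcases label_shape S e a with ⟨k, hk⟩ | ⟨n, w, hnw⟩ | hs
    · rw [hk, fiber_fill] at hinf
      exact absurd ((Set.finite_Iic k).image _) hinf
    · rw [hnw, fiber_D] at hinf
      have hD : (Dset S e n w).Infinite := by
        intro hfin
        exact hinf (hfin.image _)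
      exact ⟨n, w, (theta_forall_iff S e).1 ((Dset_infinite_iff S e).1 hD),
        by rw [hnw, fiber_D]⟩
    · rw [hs] at hinf
      exact absurd ((Set.finite_singleton a).subset (fiber_single S e a)) hinf
  · rintro ⟨n, w, hok, rfl⟩
    have hD : (Dset S e n w).Infinite :=
      (Dset_infinite_iff S e).2 ((theta_forall_iff S e).2 hok)
    obtain ⟨t0, ht0⟩ := hD.nonempty
    have hla := label_D_val S e ht0
    refine ⟨⟨Nat.pair (Nat.pair 1 (Nat.pair n w)) t0, ?_⟩,
      hD.image (Set.injOn_of_injective (pairLeft_inj _))⟩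
    rw [classOf_eq, hla, fiber_D]

theorem final_iff :
    (InfClasses (fun x y => Rfun S e x y = true)).Finite ↔
      ∃ x, ∀ y, ∃ u, ∀ v, S x y u v e = true := by
  classical
  constructor
  · intro hfin
    by_contra hc
    push_neg at hc
    have hbad : ∀ x, ∃ y, bad S e x y := by
      intro x
      obtain ⟨y, hy⟩ := hc x
      refine ⟨y, fun u => ?_⟩
      obtain ⟨v, hv⟩ := hy u
      exact ⟨v, by revert hv; cases S x y u v e <;> simp⟩
    have hex : ∀ n : ℕ, ∃ w, okw S e n w := fun n => okw_exists S e (fun x _ => hbad x)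
    have hmem : ∀ n, Cnw S e n (hex n).choose ∈
        InfClasses (fun x y => Rfun S e x y = true) := fun n =>
      (mem_InfClasses_iff S e).2 ⟨n, (hex n).choose, (hex n).choose_spec, rfl⟩
    have hinj : Function.Injective (fun n => Cnw S e n (hex n).choose) := by
      intro n n' hEq
      simp only at hEq
      have hD : (Dset S e n (hex n).choose).Infinite :=
        (Dset_infinite_iff S e).2 ((theta_forall_iff S e).2 (hex n).choose_spec)
      obtain ⟨t0, ht0⟩ := hD.nonempty
      have h1 : Nat.pair (Nat.pair 1 (Nat.pair n (hex n).choose)) t0 ∈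
          Cnw S e n (hex n).choose := ⟨t0, ht0, rfl⟩
      rw [hEq] at h1
      obtain ⟨t1, _, ht1⟩ := h1
      rw [Nat.pair_eq_pair, Nat.pair_eq_pair, Nat.pair_eq_pair] at ht1
      exact ht1.1.2.1.symm
    exact Set.infinite_of_injective_forall_mem hinj hmem hfin
  · rintro ⟨x0, hx0⟩
    set g : ℕ → Set ℕ := fun n =>
      if h : ∃ w, okw S e n w then Cnw S e n h.choose else ∅ with hg
    refine ((Set.finite_Iio x0).image g).subset ?_
    intro C hC
    obtain ⟨n, w, hok, rfl⟩ := (mem_InfClasses_iff S e).1 hC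
    have hn : n < x0 := by
      by_contra hge
      push_neg at hge
      exact bad_vs_good S e (hok.2 x0 hge).1 (hx0 (Y w x0))
    refine ⟨n, hn, ?_⟩
    have h : ∃ w', okw S e n w' := ⟨w, hok⟩
    rw [hg]
    simp only [dif_pos h]
    rw [okw_unique S e h.choose_spec hok]

section comp
open Primrec

theorem list_all_eq {β : Type} (l : List β) (p : β → Bool) :
    l.all p = l.foldr (fun b r => p b && r) true := by
  induction l with
  | nil => rfl
  | cons b l ih => simp [List.all_cons, ih]

theorem list_any_eq {β : Type} (l : List β) (p : β → Bool) :
    l.any p = l.foldr (fun b r => p b || r) false := by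
  induction l with
  | nil => rfl
  | cons b l ih => simp [List.any_cons, ih]

theorem primrec_list_all {α β : Type} [Primcodable α] [Primcodable β]
    {f : α → List β} {p : α → β → Bool} (hf : Primrec f) (hp : Primrec₂ p) :
    Primrec fun a => (f a).all (p a) := by
  have hh : Primrec₂ fun (a : α) (bs : β × Bool) => p a bs.1 && bs.2 :=
    Primrec.to₂ (Primrec.and.comp (hp.comp Primrec.fst (Primrec.fst.comp Primrec.snd))
      (Primrec.snd.comp Primrec.snd))
  exact (Primrec.list_foldr (h := fun (a : α) (bs : β × Bool) => p a bs.1 && bs.2)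
    hf (Primrec.const true) hh).of_eq fun a => (list_all_eq _ _).symm

theorem primrec_list_any {α β : Type} [Primcodable α] [Primcodable β]
    {f : α → List β} {p : α → β → Bool} (hf : Primrec f) (hp : Primrec₂ p) :
    Primrec fun a => (f a).any (p a) := by
  have hh : Primrec₂ fun (a : α) (bs : β × Bool) => p a bs.1 || bs.2 :=
    Primrec.to₂ (Primrec.or.comp (hp.comp Primrec.fst (Primrec.fst.comp Primrec.snd))
      (Primrec.snd.comp Primrec.snd))
  exact (Primrec.list_foldr (h := fun (a : α) (bs : β × Bool) => p a bs.1 || bs.2)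
    hf (Primrec.const false) hh).of_eq fun a => (list_any_eq _ _).symm

theorem primrec_LL : Primrec LL := Primrec.ofNat (List ℕ)

theorem primrec_item : Primrec₂ item :=
  Primrec.to₂ ((Primrec.list_getD 0).comp (primrec_LL.comp Primrec.fst) Primrec.snd)

theorem primrec_Y : Primrec₂ Y :=
  Primrec.to₂ (Primrec.fst.comp (Primrec.unpair.comp primrec_item))

theorem primrec_inner : Primrec₂ inner :=
  Primrec.to₂ (primrec_LL.comp (Primrec.snd.comp (Primrec.unpair.comp primrec_item)))

theorem primrec_Y_comp {α : Type} [Primcodable α] {w x : α → ℕ}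
    (hw : Primrec w) (hx : Primrec x) : Primrec fun q => Y (w q) (x q) :=
  primrec_Y.comp hw hx

theorem primrec_UU_comp {α : Type} [Primcodable α] {w x y : α → ℕ}
    (hw : Primrec w) (hx : Primrec x) (hy : Primrec y) :
    Primrec fun q => UU (w q) (x q) (y q) :=
  (Primrec.list_getD 0).comp (primrec_inner.comp hw hx) hy

theorem primrec_canon_comp {α : Type} [Primcodable α] {n w : α → ℕ}
    (hn : Primrec n) (hw : Primrec w) : Primrec fun q => canon (n q) (w q) := by
  have c1 : Primrec fun q => ((LL (w q)).length == n q + 1) :=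
    Primrec.beq.comp (Primrec.list_length.comp (primrec_LL.comp hw))
      (Primrec.succ.comp hn)
  have c2 : Primrec fun q =>
      (List.range (n q + 1)).all fun x => (inner (w q) x).length == Y (w q) x :=
    primrec_list_all (Primrec.list_range.comp (Primrec.succ.comp hn))
      (Primrec.to₂ (Primrec.beq.comp
        (Primrec.list_length.comp (primrec_inner.comp (hw.comp Primrec.fst) Primrec.snd))
        (primrec_Y_comp (hw.comp Primrec.fst) Primrec.snd)))
  exact (Primrec.and.comp c1 c2).of_eq fun q => rfl

theorem primrec_Sget_comp {α : Type} [Primcodable α] {L : α → List Bool} {x y u v e : α → ℕ}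
    (hL : Primrec L) (hx : Primrec x) (hy : Primrec y) (hu : Primrec u) (hv : Primrec v)
    (he : Primrec e) : Primrec fun q => Sget (L q) (x q) (y q) (u q) (v q) (e q) :=
  (Primrec.list_getD true).comp hL
    (Primrec₂.natPair.comp hx (Primrec₂.natPair.comp hy
      (Primrec₂.natPair.comp hu (Primrec₂.natPair.comp hv he))))

theorem primrec_aX : Primrec aX := Primrec.fst.comp Primrec.unpair
theorem primrec_aU : Primrec aU :=
  Primrec.fst.comp (Primrec.unpair.comp (Primrec.snd.comp Primrec.unpair))
theorem primrec_aY : Primrec aY :=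
  Primrec.fst.comp (Primrec.unpair.comp (Primrec.snd.comp
    (Primrec.unpair.comp (Primrec.snd.comp Primrec.unpair))))
theorem primrec_aU' : Primrec aU' :=
  Primrec.fst.comp (Primrec.unpair.comp (Primrec.snd.comp (Primrec.unpair.comp
    (Primrec.snd.comp (Primrec.unpair.comp (Primrec.snd.comp Primrec.unpair))))))
theorem primrec_aV : Primrec aV :=
  Primrec.snd.comp (Primrec.unpair.comp (Primrec.snd.comp (Primrec.unpair.comp
    (Primrec.snd.comp (Primrec.unpair.comp (Primrec.snd.comp Primrec.unpair))))))

theorem primrec_theta_comp {α : Type} [Primcodable α] {L : α → List Bool} {e n w a b : α → ℕ}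
    (hL : Primrec L) (he : Primrec e) (hn : Primrec n) (hw : Primrec w) (ha : Primrec a)
    (hb : Primrec b) : Primrec fun q => theta (Sget (L q)) (e q) (n q) (w q) (a q) (b q) := by
  have hax : Primrec fun q => aX (a q) := primrec_aX.comp ha
  have hle : Primrec fun q => decide (aX (a q) ≤ n q) := (Primrec.nat_le.comp hax hn).decide
  have hlt1 : Primrec fun q => decide (aY (a q) < Y (w q) (aX (a q))) :=
    (Primrec.nat_lt.comp (primrec_aY.comp ha) (primrec_Y_comp hw hax)).decide
  have hlt2 : Primrec fun q => decide (aU' (a q) < UU (w q) (aX (a q)) (aY (a q))) :=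
    (Primrec.nat_lt.comp (primrec_aU'.comp ha)
      (primrec_UU_comp hw hax (primrec_aY.comp ha))).decide
  have hF1 : Primrec fun q =>
      Sget (L q) (aX (a q)) (Y (w q) (aX (a q))) (aU (a q)) (b q).unpair.1 (e q) :=
    primrec_Sget_comp hL hax (primrec_Y_comp hw hax) (primrec_aU.comp ha)
      (Primrec.fst.comp (Primrec.unpair.comp hb)) he
  have hF2 : Primrec fun q =>
      Sget (L q) (aX (a q)) (aY (a q)) (UU (w q) (aX (a q)) (aY (a q))) (aV (a q)) (e q) :=
    primrec_Sget_comp hL hax (primrec_aY.comp ha)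
      (primrec_UU_comp hw hax (primrec_aY.comp ha)) (primrec_aV.comp ha) he
  have hF3 : Primrec fun q =>
      Sget (L q) (aX (a q)) (aY (a q)) (aU' (a q)) (b q).unpair.2 (e q) :=
    primrec_Sget_comp hL hax (primrec_aY.comp ha) (primrec_aU'.comp ha)
      (Primrec.snd.comp (Primrec.unpair.comp hb)) he
  have h1 : Primrec fun q => (!(decide (aX (a q) ≤ n q)) || !(Sget (L q) (aX (a q))
      (Y (w q) (aX (a q))) (aU (a q)) (b q).unpair.1 (e q))) :=
    Primrec.or.comp (Primrec.not.comp hle) (Primrec.not.comp hF1)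
  have h2 : Primrec fun q => (!(decide (aX (a q) ≤ n q) &&
      decide (aY (a q) < Y (w q) (aX (a q)))) || Sget (L q) (aX (a q)) (aY (a q))
        (UU (w q) (aX (a q)) (aY (a q))) (aV (a q)) (e q)) :=
    Primrec.or.comp (Primrec.not.comp (Primrec.and.comp hle hlt1)) hF2
  have h3 : Primrec fun q => (!(decide (aX (a q) ≤ n q) &&
      decide (aY (a q) < Y (w q) (aX (a q))) &&
      decide (aU' (a q) < UU (w q) (aX (a q)) (aY (a q)))) ||
      !(Sget (L q) (aX (a q)) (aY (a q)) (aU' (a q)) (b q).unpair.2 (e q))) :=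
    Primrec.or.comp (Primrec.not.comp (Primrec.and.comp (Primrec.and.comp hle hlt1) hlt2))
      (Primrec.not.comp hF3)
  exact ((Primrec.and.comp (Primrec.and.comp
    (Primrec.and.comp (primrec_canon_comp hn hw) h1) h2) h3)).of_eq fun q => rfl

theorem primrec_Phi_comp {α : Type} [Primcodable α] {L : α → List Bool} {e n w a s : α → ℕ}
    (hL : Primrec L) (he : Primrec e) (hn : Primrec n) (hw : Primrec w) (ha : Primrec a)
    (hs : Primrec s) : Primrec fun q => Phi (Sget (L q)) (e q) (n q) (w q) (a q) (s q) := by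
  have inner : Primrec₂ fun (q : α) (a' : ℕ) =>
      (List.range (s q + 1)).any fun b => theta (Sget (L q)) (e q) (n q) (w q) a' b :=
    Primrec.to₂ (primrec_list_any
      (Primrec.list_range.comp (Primrec.succ.comp (hs.comp Primrec.fst)))
      (Primrec.to₂ (primrec_theta_comp (hL.comp (Primrec.fst.comp Primrec.fst))
        (he.comp (Primrec.fst.comp Primrec.fst)) (hn.comp (Primrec.fst.comp Primrec.fst))
        (hw.comp (Primrec.fst.comp Primrec.fst)) (Primrec.snd.comp Primrec.fst)
        Primrec.snd)))
  exact (primrec_list_all (Primrec.list_range.comp (Primrec.succ.comp ha)) inner).of_eq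
    fun q => rfl

theorem primrec_Dmem_comp {α : Type} [Primcodable α] {L : α → List Bool} {e n w t : α → ℕ}
    (hL : Primrec L) (he : Primrec e) (hn : Primrec n) (hw : Primrec w) (ht : Primrec t) :
    Primrec fun q => Dmem (Sget (L q)) (e q) (n q) (w q) (t q) := by
  have h1 : Primrec fun q =>
      Phi (Sget (L q)) (e q) (n q) (w q) (t q).unpair.1 (t q).unpair.2 :=
    primrec_Phi_comp hL he hn hw (Primrec.fst.comp (Primrec.unpair.comp ht))
      (Primrec.snd.comp (Primrec.unpair.comp ht))
  have h2 : Primrec fun q => (List.range (t q).unpair.2).all fun s' =>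
      !(Phi (Sget (L q)) (e q) (n q) (w q) (t q).unpair.1 s') :=
    primrec_list_all
      (Primrec.list_range.comp (Primrec.snd.comp (Primrec.unpair.comp ht)))
      (Primrec.to₂ (Primrec.not.comp (primrec_Phi_comp (hL.comp Primrec.fst)
        (he.comp Primrec.fst) (hn.comp Primrec.fst) (hw.comp Primrec.fst)
        (Primrec.fst.comp (Primrec.unpair.comp (ht.comp Primrec.fst))) Primrec.snd)))
  exact (Primrec.and.comp h1 h2).of_eq fun q => rfl

theorem primrec_labelL :
    Primrec fun p : List Bool × ℕ × ℕ => labelF (Sget p.1) p.2.1 p.2.2 := by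
  have hx : Primrec fun p : List Bool × ℕ × ℕ => p.2.2 := Primrec.snd.comp Primrec.snd
  have he : Primrec fun p : List Bool × ℕ × ℕ => p.2.1 := Primrec.fst.comp Primrec.snd
  have hL : Primrec fun p : List Bool × ℕ × ℕ => p.1 := Primrec.fst
  have hm := Primrec.fst.comp (Primrec.unpair.comp hx)
  have ht := Primrec.snd.comp (Primrec.unpair.comp hx)
  have hc := Primrec.fst.comp (Primrec.unpair.comp hm)
  have hk := Primrec.snd.comp (Primrec.unpair.comp hm)
  have hcond1 : PrimrecPred fun p : List Bool × ℕ × ℕ =>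
      p.2.2.unpair.1.unpair.1 = 0 ∧ p.2.2.unpair.2 ≤ p.2.2.unpair.1.unpair.2 :=
    PrimrecPred.and (Primrec.eq.comp hc (Primrec.const 0)) (Primrec.nat_le.comp ht hk)
  have hcond2 : PrimrecPred fun p : List Bool × ℕ × ℕ =>
      p.2.2.unpair.1.unpair.1 = 1 ∧ Dmem (Sget p.1) p.2.1
        p.2.2.unpair.1.unpair.2.unpair.1 p.2.2.unpair.1.unpair.2.unpair.2
        p.2.2.unpair.2 = true :=
    PrimrecPred.and (Primrec.eq.comp hc (Primrec.const 1))
      (Primrec.eq.comp (primrec_Dmem_comp hL he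
        (Primrec.fst.comp (Primrec.unpair.comp hk))
        (Primrec.snd.comp (Primrec.unpair.comp hk)) ht) (Primrec.const true))
  have hv1 : Primrec fun p : List Bool × ℕ × ℕ =>
      Nat.pair 0 (Nat.pair 0 p.2.2.unpair.1.unpair.2) :=
    Primrec₂.natPair.comp (Primrec.const 0) (Primrec₂.natPair.comp (Primrec.const 0) hk)
  have hv2 : Primrec fun p : List Bool × ℕ × ℕ =>
      Nat.pair 0 (Nat.pair 1 p.2.2.unpair.1.unpair.2) :=
    Primrec₂.natPair.comp (Primrec.const 0) (Primrec₂.natPair.comp (Primrec.const 1) hk)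
  have hv3 : Primrec fun p : List Bool × ℕ × ℕ => Nat.pair 1 p.2.2 :=
    Primrec₂.natPair.comp (Primrec.const 1) hx
  exact (Primrec.ite hcond1 hv1 (Primrec.ite hcond2 hv2 hv3)).of_eq fun p => rfl

end comp

section main

def tabfun (S : ℕ → ℕ → ℕ → ℕ → ℕ → Bool) : ℕ → Bool := fun q =>
  S q.unpair.1 q.unpair.2.unpair.1 q.unpair.2.unpair.2.unpair.1
    q.unpair.2.unpair.2.unpair.2.unpair.1 q.unpair.2.unpair.2.unpair.2.unpair.2

theorem computable_tabfun {S : ℕ → ℕ → ℕ → ℕ → ℕ → Bool}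
    (hS : Computable
      (fun q : ℕ × ℕ × ℕ × ℕ × ℕ => S q.1 q.2.1 q.2.2.1 q.2.2.2.1 q.2.2.2.2)) :
    Computable (tabfun S) := by
  have h2 := Primrec.unpair.comp (Primrec.snd.comp Primrec.unpair)
  have h3 := Primrec.unpair.comp (Primrec.snd.comp h2)
  have h4 := Primrec.unpair.comp (Primrec.snd.comp h3)
  have hdec : Primrec fun q : ℕ => ((q.unpair.1, q.unpair.2.unpair.1,
      q.unpair.2.unpair.2.unpair.1, q.unpair.2.unpair.2.unpair.2.unpair.1,
      q.unpair.2.unpair.2.unpair.2.unpair.2) : ℕ × ℕ × ℕ × ℕ × ℕ) :=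
    (Primrec.fst.comp Primrec.unpair).pair ((Primrec.fst.comp h2).pair
      ((Primrec.fst.comp h3).pair ((Primrec.fst.comp h4).pair (Primrec.snd.comp h4))))
  have hc := hS.comp hdec.to_comp
  refine hc.of_eq fun q => ?_
  rfl

theorem computable_Stab {S : ℕ → ℕ → ℕ → ℕ → ℕ → Bool}
    (hS : Computable
      (fun q : ℕ × ℕ × ℕ × ℕ × ℕ => S q.1 q.2.1 q.2.2.1 q.2.2.2.1 q.2.2.2.2)) :
    Computable (Stab S) := by
  have hg := computable_tabfun hS
  have hh : Computable₂ fun (_ : ℕ) (p : ℕ × List Bool) => p.2 ++ [tabfun S (p.1+1)] :=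
    Computable.to₂ (Computable.list_concat.comp (Computable.snd.comp Computable.snd)
      (hg.comp (Computable.succ.comp (Computable.fst.comp Computable.snd))))
  have h := Computable.nat_rec Computable.id (Computable.const [tabfun S 0]) hh
  refine h.of_eq fun N => ?_
  simp only [id_eq]
  induction N with
  | zero => simp [Stab, tabfun, List.range_succ]
  | succ N ih =>
    have hr : Stab S (N+1) = Stab S N ++ [tabfun S (N+1)] := by
      show (List.range (N+1+1)).map (tabfun S) = _
      rw [List.range_succ, List.map_append]
      rfl
    rw [hr, ← ih]

theorem computable_label {S : ℕ → ℕ → ℕ → ℕ → ℕ → Bool}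
    (hS : Computable
      (fun q : ℕ × ℕ × ℕ × ℕ × ℕ => S q.1 q.2.1 q.2.2.1 q.2.2.2.1 q.2.2.2.2)) :
    Computable₂ (label S) := by
  have hq : Primrec fun p : ℕ × ℕ => quint p.2 p.2 p.2 p.2 p.1 :=
    Primrec₂.natPair.comp Primrec.snd (Primrec₂.natPair.comp Primrec.snd
      (Primrec₂.natPair.comp Primrec.snd (Primrec₂.natPair.comp Primrec.snd Primrec.fst)))
  have harg : Computable fun p : ℕ × ℕ =>
      ((Stab S (quint p.2 p.2 p.2 p.2 p.1), p) : List Bool × ℕ × ℕ) :=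
    Computable.pair ((computable_Stab hS).comp hq.to_comp) Computable.id
  have hc := primrec_labelL.to_comp.comp harg
  have hc2 : Computable (fun p : ℕ × ℕ => label S p.1 p.2) := hc.of_eq fun p => rfl
  exact hc2

theorem computable_R {S : ℕ → ℕ → ℕ → ℕ → ℕ → Bool}
    (hS : Computable
      (fun q : ℕ × ℕ × ℕ × ℕ × ℕ => S q.1 q.2.1 q.2.2.1 q.2.2.2.1 q.2.2.2.2)) :
    Computable (fun p : ℕ × ℕ × ℕ => Rfun S p.1 p.2.1 p.2.2) := by
  have hl := computable_label hS
  have hc := Primrec.beq.to_comp.comp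
    (hl.comp Computable.fst (Computable.fst.comp Computable.snd))
    (hl.comp Computable.fst (Computable.snd.comp Computable.snd))
  refine hc.of_eq fun p => ?_
  rfl

end main

end S16

/-- Σ⁰₄-hardness construction: for every total computable predicate `S` there is a
uniformly computable family `(R_e)` of unbounded equivalence relations having only
finitely many infinite classes iff `∃x ∀y ∃u ∀v, S x y u v e`. -/
theorem stmt16 (S : ℕ → ℕ → ℕ → ℕ → ℕ → Bool)
    (hS : Computable
      (fun q : ℕ × ℕ × ℕ × ℕ × ℕ => S q.1 q.2.1 q.2.2.1 q.2.2.2.1 q.2.2.2.2)) :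
    ∃ R : ℕ → ℕ → ℕ → Bool,
      Computable (fun p : ℕ × ℕ × ℕ => R p.1 p.2.1 p.2.2) ∧
      (∀ e, Equivalence (fun x y => R e x y = true)) ∧
      (∀ e, UnboundedCharacter (fun x y => R e x y = true)) ∧
      (∀ e, (InfClasses (fun x y => R e x y = true)).Finite ↔
        ∃ x, ∀ y, ∃ u, ∀ v, S x y u v e = true) := by
  exact ⟨S16.Rfun S, S16.computable_R hS, fun e => S16.equiv_Rfun S e,
    fun e => S16.unbounded_Rfun S e, fun e => S16.final_iff S e⟩
end

section
/- Let A be the computable equivalence relation on ℕ defined by x ~ y iff x = y or both x and y are even (so A has exactly one infinite class and infinitely many singleton classes). There is a uniformly computable family of equivalence relations (R_e)_{e∈ℕ} on ℕ such that for every e: R_e is bi-embeddable with A if and only if W_e is infinite. -/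
open Nat.Partrec (Code)
open Nat.Partrec.Code

/-- the `e`-th code -/
def codeOf (e : ℕ) : Code := Denumerable.ofNat Code e

/-- `x` enters `W e` exactly at stage `s+1`. -/
def newAt (e s x : ℕ) : Bool :=
  (evaln (s+1) (codeOf e) x).isSome && !(evaln s (codeOf e) x).isSome

def Tb (e n : ℕ) : Bool :=
  (n % 2 == 0) && (List.range (n / 2 + 1)).foldr (fun x r => newAt e (n / 2) x || r) false

def Rb (e x y : ℕ) : Bool := (x == y) || (Tb e x && Tb e y)

lemma foldr_or_eq : ∀ (l : List ℕ) (p : ℕ → Bool),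
    (l.foldr (fun x r => p x || r) false = true ↔ ∃ x ∈ l, p x = true)
  | [], p => by simp
  | a :: l, p => by simp [foldr_or_eq l p]

lemma isSome_mono {c : Code} {k k' x : ℕ} (h : k ≤ k')
    (hs : (evaln k c x).isSome = true) : (evaln k' c x).isSome = true := by
  rw [Option.isSome_iff_exists] at hs ⊢
  obtain ⟨a, ha⟩ := hs
  exact ⟨a, evaln_mono h ha⟩

lemma newAt_le {e s x : ℕ} (h : newAt e s x = true) : x ≤ s := by
  rw [newAt, Bool.and_eq_true, Option.isSome_iff_exists] at h
  obtain ⟨⟨a, ha⟩, _⟩ := h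
  exact Nat.lt_succ_iff.mp (evaln_bound ha)

lemma newAt_unique {e s s' x : ℕ} (h : newAt e s x = true) (h' : newAt e s' x = true) :
    s = s' := by
  rw [newAt, Bool.and_eq_true, Bool.not_eq_true', Bool.eq_false_iff] at h h'
  by_contra hne
  rcases Nat.lt_or_ge s s' with hlt | hge
  · exact h'.2 (isSome_mono hlt h.1)
  · rcases Nat.lt_or_ge s' s with hlt' | hge'
    · exact h.2 (isSome_mono hlt' h'.1)
    · exact hne (le_antisymm hge' hge)

lemma newAt_mem_W {e s x : ℕ} (h : newAt e s x = true) : x ∈ W e := by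
  rw [newAt, Bool.and_eq_true, Option.isSome_iff_exists] at h
  obtain ⟨⟨a, ha⟩, _⟩ := h
  exact Part.dom_iff_mem.mpr ⟨a, evaln_sound ha⟩

lemma mem_W_exists_newAt {e x : ℕ} (h : x ∈ W e) : ∃ s, newAt e s x = true := by
  have : ∃ k, ((evaln k (codeOf e) x).isSome = true) := by
    obtain ⟨a, ha⟩ := Part.dom_iff_mem.mp h
    obtain ⟨k, hk⟩ := evaln_complete.mp ha
    exact ⟨k, Option.isSome_iff_exists.mpr ⟨a, hk⟩⟩
  classical
  let k := Nat.find this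
  have hk : (evaln k (codeOf e) x).isSome = true := Nat.find_spec this
  have hk0 : k ≠ 0 := by
    intro h0
    rw [h0] at hk
    simp [evaln] at hk
  refine ⟨k - 1, ?_⟩
  rw [newAt, Bool.and_eq_true, Bool.not_eq_true', Bool.eq_false_iff]
  constructor
  · have hkk : k - 1 + 1 = k := by omega
    rwa [hkk]
  · intro hsome
    exact Nat.find_min this (Nat.pred_lt hk0) hsome

lemma Tb_iff {e n : ℕ} : Tb e n = true ↔ n % 2 = 0 ∧ ∃ x, newAt e (n / 2) x = true := by
  rw [Tb, Bool.and_eq_true, beq_iff_eq, foldr_or_eq]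
  constructor
  · rintro ⟨h1, x, _, hx⟩; exact ⟨h1, x, hx⟩
  · rintro ⟨h1, x, hx⟩
    exact ⟨h1, x, List.mem_range.mpr (Nat.lt_succ_of_le (newAt_le hx)), hx⟩

lemma Tb_even {e n : ℕ} (h : Tb e n = true) : Even n :=
  Nat.even_iff.mpr (Tb_iff.mp h).1

/-- `Tb e` infinite iff `W e` infinite -/
lemma Tb_infinite_iff {e : ℕ} : {n | Tb e n = true}.Infinite ↔ (W e).Infinite := by
  constructor
  · intro hT
    classical
    have : Infinite {n // Tb e n = true} := Set.infinite_coe_iff.mpr hT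
    refine Set.infinite_of_injective_forall_mem
      (f := fun n : {n // Tb e n = true} => Classical.choose (Tb_iff.mp n.2).2) ?_ ?_
    · rintro ⟨n, hn⟩ ⟨m, hm⟩ hnm
      have hn' := Classical.choose_spec (Tb_iff.mp hn).2
      have hm' := Classical.choose_spec (Tb_iff.mp hm).2
      simp only at hnm
      rw [hnm] at hn'
      have hdiv : n / 2 = m / 2 := newAt_unique hn' hm'
      have h1 : n % 2 = 0 := (Tb_iff.mp hn).1
      have h2 : m % 2 = 0 := (Tb_iff.mp hm).1
      have : n = m := by omega
      exact Subtype.ext this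
    · rintro ⟨n, hn⟩
      exact newAt_mem_W (Classical.choose_spec (Tb_iff.mp hn).2)
  · intro hW
    apply Set.infinite_of_forall_exists_gt
    intro k
    obtain ⟨x, hxW, hxk⟩ := hW.exists_gt k
    obtain ⟨s, hs⟩ := mem_W_exists_newAt hxW
    have hxs : x ≤ s := newAt_le hs
    refine ⟨2 * s, ?_, by omega⟩
    rw [Set.mem_setOf_eq, Tb_iff]
    refine ⟨by omega, x, ?_⟩
    have : 2 * s / 2 = s := by omega
    rwa [this]

lemma newAt_primrec : Primrec fun q : (ℕ × ℕ) × ℕ => newAt q.1.1 q.1.2 q.2 := by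
  have hcode : Primrec codeOf := Primrec.ofNat Code
  have h1 : Primrec fun q : (ℕ × ℕ) × ℕ => evaln (q.1.2 + 1) (codeOf q.1.1) q.2 :=
    primrec_evaln.comp <| Primrec.pair
      (Primrec.pair (Primrec.succ.comp (Primrec.snd.comp Primrec.fst))
        (hcode.comp (Primrec.fst.comp Primrec.fst))) Primrec.snd
  have h2 : Primrec fun q : (ℕ × ℕ) × ℕ => evaln q.1.2 (codeOf q.1.1) q.2 :=
    primrec_evaln.comp <| Primrec.pair
      (Primrec.pair (Primrec.snd.comp Primrec.fst)
        (hcode.comp (Primrec.fst.comp Primrec.fst))) Primrec.snd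
  exact (Primrec.dom_bool₂ (· && ·)).comp
    (Primrec.option_isSome.comp h1)
    ((Primrec.dom_bool (!·)).comp (Primrec.option_isSome.comp h2))

lemma Tb_primrec : Primrec₂ Tb := by
  have hhalf : Primrec fun p : ℕ × ℕ => p.2 / 2 :=
    Primrec.nat_div.comp Primrec.snd (Primrec.const 2)
  have hfold : Primrec fun p : ℕ × ℕ =>
      (List.range (p.2 / 2 + 1)).foldr (fun x r => newAt p.1 (p.2 / 2) x || r) false := by
    have hh : Primrec₂ fun (p : ℕ × ℕ) (q : ℕ × Bool) => newAt p.1 (p.2 / 2) q.1 || q.2 :=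
      Primrec₂.mk <| (Primrec.dom_bool₂ (· || ·)).comp
        (newAt_primrec.comp <| Primrec.pair
          (Primrec.pair (Primrec.fst.comp Primrec.fst) (hhalf.comp Primrec.fst))
          (Primrec.fst.comp Primrec.snd))
        (Primrec.snd.comp Primrec.snd)
    exact (Primrec.list_foldr (Primrec.list_range.comp (Primrec.succ.comp hhalf))
      (Primrec.const false) hh).of_eq fun p => rfl
  have hmod : Primrec fun p : ℕ × ℕ => (p.2 % 2 == 0) :=
    Primrec.beq.comp (Primrec.nat_mod.comp Primrec.snd (Primrec.const 2)) (Primrec.const 0)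
  exact Primrec₂.mk <| (Primrec.dom_bool₂ (· && ·)).comp hmod hfold

lemma Rb_computable : Computable (fun p : ℕ × ℕ × ℕ => Rb p.1 p.2.1 p.2.2) := by
  have : Primrec (fun p : ℕ × ℕ × ℕ => Rb p.1 p.2.1 p.2.2) := by
    have hxy : Primrec fun p : ℕ × ℕ × ℕ => (p.2.1 == p.2.2) :=
      Primrec.beq.comp (Primrec.fst.comp Primrec.snd) (Primrec.snd.comp Primrec.snd)
    have hT1 : Primrec fun p : ℕ × ℕ × ℕ => Tb p.1 p.2.1 :=
      Tb_primrec.comp Primrec.fst (Primrec.fst.comp Primrec.snd)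
    have hT2 : Primrec fun p : ℕ × ℕ × ℕ => Tb p.1 p.2.2 :=
      Tb_primrec.comp Primrec.fst (Primrec.snd.comp Primrec.snd)
    exact (Primrec.dom_bool₂ (· || ·)).comp hxy ((Primrec.dom_bool₂ (· && ·)).comp hT1 hT2)
  exact this.to_comp

lemma Rb_iff {e x y : ℕ} :
    Rb e x y = true ↔ x = y ∨ (Tb e x = true ∧ Tb e y = true) := by
  simp [Rb]

lemma Rb_equivalence (e : ℕ) : Equivalence (fun x y => Rb e x y = true) := by
  constructor
  · intro x; rw [Rb_iff]; exact Or.inl rfl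
  · intro x y h; rw [Rb_iff] at *
    rcases h with h | ⟨h1, h2⟩
    · exact Or.inl h.symm
    · exact Or.inr ⟨h2, h1⟩
  · intro x y z hxy hyz; rw [Rb_iff] at *
    rcases hxy with rfl | ⟨h1, h2⟩
    · exact hyz
    · rcases hyz with rfl | ⟨h3, h4⟩
      · exact Or.inr ⟨h1, h2⟩
      · exact Or.inr ⟨h1, h4⟩

lemma emb1 (e : ℕ) : IsEmb (fun x y => Rb e x y = true)
    (fun x y => x = y ∨ (Even x ∧ Even y)) (fun x => if Tb e x = true then x else 2 * x + 1) := by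
  classical
  have hinj : Function.Injective (fun x => if Tb e x = true then x else 2 * x + 1) := by
    intro a b hab
    have hab' : (if Tb e a = true then a else 2 * a + 1)
        = (if Tb e b = true then b else 2 * b + 1) := hab
    by_cases ha : Tb e a = true <;> by_cases hb : Tb e b = true
    · rw [if_pos ha, if_pos hb] at hab'; exact hab'
    · rw [if_pos ha, if_neg hb] at hab'
      have := Nat.even_iff.mp (Tb_even ha); omega
    · rw [if_neg ha, if_pos hb] at hab'
      have := Nat.even_iff.mp (Tb_even hb); omega
    · rw [if_neg ha, if_neg hb] at hab'; omega
  refine ⟨hinj, fun x y => ?_⟩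
  constructor
  · intro h
    rcases Rb_iff.mp h with rfl | ⟨h1, h2⟩
    · exact Or.inl rfl
    · simp only [if_pos h1, if_pos h2]
      exact Or.inr ⟨Tb_even h1, Tb_even h2⟩
  · intro h
    rcases h with h | ⟨h1, h2⟩
    · exact Rb_iff.mpr (Or.inl (hinj h))
    · apply Rb_iff.mpr; right
      constructor
      · by_contra hx
        simp only [if_neg hx] at h1
        have := Nat.even_iff.mp h1; omega
      · by_contra hy
        simp only [if_neg hy] at h2
        have := Nat.even_iff.mp h2; omega

lemma emb2 (e : ℕ) (hT : {n | Tb e n = true}.Infinite) :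
    ∃ g, IsEmb (fun x y => x = y ∨ (Even x ∧ Even y)) (fun x y => Rb e x y = true) g := by
  classical
  set emb := hT.natEmbedding with hemb
  refine ⟨fun x => if Even x then (emb (x / 2) : ℕ) else x, ?_, ?_⟩
  · intro a b hab
    have hab' : (if Even a then (emb (a / 2) : ℕ) else a)
        = (if Even b then (emb (b / 2) : ℕ) else b) := hab
    by_cases ha : Even a <;> by_cases hb : Even b
    · rw [if_pos ha, if_pos hb] at hab'
      have h2 : a / 2 = b / 2 := emb.injective (Subtype.ext hab')
      have := Nat.even_iff.mp ha; have := Nat.even_iff.mp hb; omega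
    · rw [if_pos ha, if_neg hb] at hab'
      have h1 : Tb e b = true := by rw [← hab']; exact (emb (a / 2)).2
      exact absurd (Tb_even h1) hb
    · rw [if_neg ha, if_pos hb] at hab'
      have h1 : Tb e a = true := by rw [hab']; exact (emb (b / 2)).2
      exact absurd (Tb_even h1) ha
    · rw [if_neg ha, if_neg hb] at hab'; exact hab'
  · intro x y
    constructor
    · rintro (rfl | ⟨hx, hy⟩)
      · exact Rb_iff.mpr (Or.inl rfl)
      · apply Rb_iff.mpr; right
        simp only [if_pos hx, if_pos hy]
        exact ⟨(emb (x / 2)).2, (emb (y / 2)).2⟩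
    · intro h
      rcases Rb_iff.mp h with h | ⟨h1, h2⟩
      · left
        have hinj : Function.Injective
            (fun x => if Even x then (emb (x / 2) : ℕ) else x) := by
          intro a b hab
          have hab' : (if Even a then (emb (a / 2) : ℕ) else a)
              = (if Even b then (emb (b / 2) : ℕ) else b) := hab
          by_cases ha : Even a <;> by_cases hb : Even b
          · rw [if_pos ha, if_pos hb] at hab'
            have h2 : a / 2 = b / 2 := emb.injective (Subtype.ext hab')
            have := Nat.even_iff.mp ha; have := Nat.even_iff.mp hb; omega
          · rw [if_pos ha, if_neg hb] at hab'
            have h1 : Tb e b = true := by rw [← hab']; exact (emb (a / 2)).2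
            exact absurd (Tb_even h1) hb
          · rw [if_neg ha, if_pos hb] at hab'
            have h1 : Tb e a = true := by rw [hab']; exact (emb (b / 2)).2
            exact absurd (Tb_even h1) ha
          · rw [if_neg ha, if_neg hb] at hab'; exact hab'
        exact hinj h
      · right
        constructor
        · by_contra hx
          simp only [if_neg hx] at h1
          exact hx (Tb_even h1)
        · by_contra hy
          simp only [if_neg hy] at h2
          exact hy (Tb_even h2)

lemma no_emb (e : ℕ) (hT : ¬ {n | Tb e n = true}.Infinite)
    (g : ℕ → ℕ) (hg : IsEmb (fun x y => x = y ∨ (Even x ∧ Even y))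
      (fun x y => Rb e x y = true) g) : False := by
  apply hT
  refine Set.infinite_of_injective_forall_mem (f := fun n : ℕ => g (2 * (n + 1))) ?_ ?_
  · intro a b hab
    have := hg.1 hab
    omega
  · intro n
    have hA : (0 : ℕ) = 2 * (n + 1) ∨ (Even 0 ∧ Even (2 * (n + 1))) :=
      Or.inr ⟨Even.zero, Nat.even_iff.mpr (by omega)⟩
    have hR := (hg.2 0 (2 * (n + 1))).mp hA
    rcases Rb_iff.mp hR with h | ⟨_, h2⟩
    · exact absurd (hg.1 h) (by omega)
    · exact h2

/-- For `A` with exactly one infinite class and infinitely many singleton classes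
(`x ~ y` iff `x = y` or both even), there is a uniformly computable family `(R_e)`
of equivalence relations with `R_e` bi-embeddable with `A` iff `W_e` is infinite. -/
theorem stmt18 :
    ∃ R : ℕ → ℕ → ℕ → Bool,
      Computable (fun p : ℕ × ℕ × ℕ => R p.1 p.2.1 p.2.2) ∧
      (∀ e, Equivalence (fun x y => R e x y = true)) ∧
      (∀ e, BiEmb (fun x y => R e x y = true)
          (fun x y => x = y ∨ (Even x ∧ Even y)) ↔ (W e).Infinite) := by
  refine ⟨Rb, Rb_computable, Rb_equivalence, fun e => ?_⟩
  constructor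
  · rintro ⟨-, g, hg⟩
    by_contra hW
    have hT : ¬ {n | Tb e n = true}.Infinite := fun h => hW (Tb_infinite_iff.mp h)
    exact no_emb e hT g hg
  · intro hW
    have hT := Tb_infinite_iff.mpr hW
    exact ⟨⟨_, emb1 e⟩, emb2 e hT⟩
end
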